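/- arXiv:2509.13599 — 6 statements merged into one kernel-verified Lean document; each statement's English description precedes it below -/
import Mathlib

section
/- Let X be a compact metric space, Γ a finite group, and for each n a set map αₙ : Γ → Homeo(X) such that the family {αₙ(γ) : n ∈ ℕ, γ ∈ Γ} is equicontinuous and sup over x of d(αₙ(γ₁)(αₙ(γ₂)(x)), αₙ(γ₁γ₂)(x)) → 0 as n → ∞ for all γ₁, γ₂ ∈ Γ. Then there exist a subsequence (n_k) and a group homomorphism β : Γ → Homeo(X) such that sup_{x∈X} d(β(γ)(x), α_{n_k}(γ)(x)) → 0 as k → ∞ for every γ ∈ Γ. -/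
open Filter Topology BoundedContinuousFunction

/-- An equicontinuous sequence of "almost-actions" of a finite group `Γ` on a
compact metric space `X` by homeomorphisms admits a subsequence uniformly converging to a
genuine action by homeomorphisms. -/
theorem almost_action_homeo_perturbation
    {X : Type*} [MetricSpace X] [CompactSpace X]
    {Γ : Type*} [Group Γ] [Finite Γ]
    (α : ℕ → Γ → X ≃ₜ X)
    (hequi : UniformEquicontinuous (fun p : ℕ × Γ => ((α p.1 p.2 : X → X))))
    (hmul : ∀ γ₁ γ₂ : Γ, ∀ ε > (0 : ℝ), ∀ᶠ n in atTop,
      ∀ x : X, dist (α n γ₁ (α n γ₂ x)) (α n (γ₁ * γ₂) x) < ε) :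
    ∃ n : ℕ → ℕ, StrictMono n ∧ ∃ β : Γ → X ≃ₜ X,
      (β 1 = Homeomorph.refl X) ∧
      (∀ γ₁ γ₂ : Γ, ∀ x : X, β (γ₁ * γ₂) x = β γ₁ (β γ₂ x)) ∧
      ∀ γ : Γ, ∀ ε > (0 : ℝ), ∀ᶠ k in atTop,
        ∀ x : X, dist (β γ x) (α (n k) γ x) < ε := by
  classical
  letI : Fintype Γ := Fintype.ofFinite Γ
  set F : ℕ × Γ → (X →ᵇ X) := fun p =>
    BoundedContinuousFunction.mkOfCompact ⟨(α p.1 p.2 : X → X), (α p.1 p.2).continuous⟩ with hF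
  have hFcoe : ∀ p, ⇑(F p) = (α p.1 p.2 : X → X) := fun p => rfl
  -- Arzelà–Ascoli: the closure of the range of `F` is compact.
  have hA : IsCompact (closure (Set.range F)) := by
    apply arzela_ascoli (Set.univ : Set X) isCompact_univ
    · intro f x _; trivial
    · have h1 : Equicontinuous (fun p : ℕ × Γ => (α p.1 p.2 : X → X)) := hequi.equicontinuous
      have pick : ∀ a : Set.range F, ∃ p, F p = (a : X →ᵇ X) := fun a => a.2
      choose p hp using pick
      have heq : (fun a : Set.range F => ((a : X →ᵇ X) : X → X))
           = (fun q : ℕ × Γ => (α q.1 q.2 : X → X)) ∘ p := by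
        funext a
        rw [Function.comp_apply, ← hFcoe, hp]
      have := h1.comp p
      rw [← heq] at this
      exact this
  set u : ℕ → Γ → (X →ᵇ X) := fun n γ => F (n, γ) with hu
  have hKc : IsCompact (Set.univ.pi fun _ : Γ => closure (Set.range F)) :=
    isCompact_univ_pi fun _ => hA
  obtain ⟨g, -, φ, hφ, hg⟩ := hKc.tendsto_subseq (x := u)
    (fun n => by intro γ _; exact subset_closure ⟨(n, γ), rfl⟩)
  have hconv : ∀ γ, Tendsto (fun k => u (φ k) γ) atTop (𝓝 (g γ)) := by
    intro γ
    exact (tendsto_pi_nhds.1 hg) γ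
  -- uniform convergence of each coordinate
  have key : ∀ γ : Γ, ∀ ε > (0 : ℝ), ∀ᶠ k in atTop, ∀ x, dist (g γ x) (α (φ k) γ x) < ε := by
    intro γ ε hε
    obtain ⟨N, hN⟩ := Metric.tendsto_atTop.1 (hconv γ) ε hε
    refine eventually_atTop.2 ⟨N, fun k hk x => ?_⟩
    have h1 : dist (g γ x) (α (φ k) γ x) ≤ dist (g γ) (u (φ k) γ) := by
      have := BoundedContinuousFunction.dist_coe_le_dist (f := g γ) (g := u (φ k) γ) x
      simpa [hu, hFcoe] using this
    calc dist (g γ x) (α (φ k) γ x) ≤ dist (g γ) (u (φ k) γ) := h1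
      _ = dist (u (φ k) γ) (g γ) := dist_comm _ _
      _ < ε := hN k hk
  -- the limit is multiplicative
  have hcomp : ∀ γ₁ γ₂ : Γ, ∀ x : X, g (γ₁ * γ₂) x = g γ₁ (g γ₂ x) := by
    intro γ₁ γ₂ x
    refine eq_of_forall_dist_le fun ε hε => ?_
    obtain ⟨δ, hδ, hδ'⟩ := Metric.uniformEquicontinuous_iff.1 hequi (ε/4) (by linarith)
    have e1 := key γ₁ (ε/4) (by linarith)
    have e2 := key γ₂ δ hδ
    have e3 := key (γ₁ * γ₂) (ε/4) (by linarith)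
    have e4 : ∀ᶠ k in atTop, ∀ y : X,
        dist (α (φ k) γ₁ (α (φ k) γ₂ y)) (α (φ k) (γ₁ * γ₂) y) < ε/4 :=
      hφ.tendsto_atTop.eventually (hmul γ₁ γ₂ (ε/4) (by linarith))
    obtain ⟨k, ⟨h1, h2⟩, h3, h4⟩ := ((e1.and e2).and (e3.and e4)).exists
    -- chain of estimates
    have d1 : dist (g (γ₁ * γ₂) x) (α (φ k) (γ₁ * γ₂) x) < ε/4 := h3 x
    have d2 : dist (α (φ k) (γ₁ * γ₂) x) (α (φ k) γ₁ (α (φ k) γ₂ x)) < ε/4 := by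
      rw [dist_comm]; exact h4 x
    have d3 : dist (α (φ k) γ₁ (α (φ k) γ₂ x)) (α (φ k) γ₁ (g γ₂ x)) < ε/4 := by
      have hx : dist (α (φ k) γ₂ x) (g γ₂ x) < δ := by
        rw [dist_comm]; exact h2 x
      exact hδ' _ _ hx (φ k, γ₁)
    have d4 : dist (α (φ k) γ₁ (g γ₂ x)) (g γ₁ (g γ₂ x)) < ε/4 := by
      rw [dist_comm]; exact h1 (g γ₂ x)
    have t1 : dist (g (γ₁ * γ₂) x) (g γ₁ (g γ₂ x)) ≤
        dist (g (γ₁ * γ₂) x) (α (φ k) (γ₁ * γ₂) x) +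
        (dist (α (φ k) (γ₁ * γ₂) x) (α (φ k) γ₁ (α (φ k) γ₂ x)) +
        (dist (α (φ k) γ₁ (α (φ k) γ₂ x)) (α (φ k) γ₁ (g γ₂ x)) +
         dist (α (φ k) γ₁ (g γ₂ x)) (g γ₁ (g γ₂ x)))) := by
      calc dist (g (γ₁ * γ₂) x) (g γ₁ (g γ₂ x))
          ≤ dist (g (γ₁ * γ₂) x) (α (φ k) (γ₁ * γ₂) x) +
            dist (α (φ k) (γ₁ * γ₂) x) (g γ₁ (g γ₂ x)) := dist_triangle _ _ _
        _ ≤ _ := by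
            gcongr
            exact dist_triangle4 _ _ _ _ |>.trans (by rw [add_assoc])
    linarith
  -- the limit at `1` is surjective
  have hsurj : Function.Surjective fun x => g 1 x := by
    intro y
    set xs : ℕ → X := fun k => (α (φ k) 1).symm y with hxs
    obtain ⟨x, -, ψ, hψ, hx⟩ := isCompact_univ.tendsto_subseq
      (x := xs) (fun n => Set.mem_univ _)
    refine ⟨x, ?_⟩
    have hc : Tendsto (fun j => g 1 (xs (ψ j))) atTop (𝓝 (g 1 x)) :=
      ((g 1).continuous.tendsto x).comp hx
    have h2 : ∀ j, dist (g 1 (xs (ψ j))) y ≤ dist (g 1) (u (φ (ψ j)) 1) := by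
      intro j
      have hy : u (φ (ψ j)) 1 (xs (ψ j)) = y := by
        show (α (φ (ψ j)) 1) ((α (φ (ψ j)) 1).symm y) = y
        exact (α (φ (ψ j)) 1).apply_symm_apply y
      calc dist (g 1 (xs (ψ j))) y
          = dist (g 1 (xs (ψ j))) (u (φ (ψ j)) 1 (xs (ψ j))) := by rw [hy]
        _ ≤ dist (g 1) (u (φ (ψ j)) 1) := dist_coe_le_dist _
    have h3 : Tendsto (fun j => dist (g 1) (u (φ (ψ j)) 1)) atTop (𝓝 0) := by
      have h0 := tendsto_iff_dist_tendsto_zero.1 (hconv 1)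
      have := h0.comp hψ.tendsto_atTop
      simpa [Function.comp_def, dist_comm] using this
    have h4 : Tendsto (fun j => dist (g 1 (xs (ψ j))) y) atTop (𝓝 (dist (g 1 x) y)) :=
      hc.dist tendsto_const_nhds
    have hle : dist (g 1 x) y ≤ 0 :=
      le_of_tendsto_of_tendsto' h4 h3 h2
    exact dist_le_zero.1 hle
  have hone : ∀ x, g 1 x = x := by
    intro x
    obtain ⟨z, hz⟩ := hsurj x
    have := hcomp 1 1 z
    rw [one_mul] at this
    simp only at hz
    rw [← hz, ← this, hz]
  have hinv₁ : ∀ γ : Γ, ∀ x, g γ (g γ⁻¹ x) = x := by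
    intro γ x
    rw [← hcomp, mul_inv_cancel]
    exact hone x
  have hinv₂ : ∀ γ : Γ, ∀ x, g γ⁻¹ (g γ x) = x := by
    intro γ x
    rw [← hcomp, inv_mul_cancel]
    exact hone x
  refine ⟨φ, hφ, fun γ =>
    { toFun := g γ
      invFun := g γ⁻¹
      left_inv := hinv₂ γ
      right_inv := hinv₁ γ
      continuous_toFun := (g γ).continuous
      continuous_invFun := (g γ⁻¹).continuous }, ?_, ?_, ?_⟩
  · exact Homeomorph.ext fun x => hone x
  · intro γ₁ γ₂ x
    exact hcomp γ₁ γ₂ x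
  · intro γ ε hε
    simpa using key γ ε hε
end

section
/- Let Λ be a finite group acting on a Cantor set X (a compact, totally disconnected, perfect metric space), let 𝒳 be a finite clopen partition of X preserved by the action with each element of diameter < ε, and let E ⊆ X be a finite Λ-invariant-count set, meaning #(E ∩ U) = #(E ∩ λ·U) for all λ ∈ Λ and U ∈ 𝒳. Then there exists an action α̃ : Λ → Sym(E) such that for every λ ∈ Λ, U ∈ 𝒳, and e ∈ E ∩ U, we have α̃(λ)(e) ∈ λ·U (hence d(α̃(λ)(e), λ·e) < ε + diam(λ·U) ≤ 2ε in suitable formulations). -/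
open Filter Topology

open Classical in
noncomputable def myS {X : Type*} (E : Finset X) (U : Set X) : Finset X :=
  E.filter (· ∈ U)

lemma myS_mem {X : Type*} {E : Finset X} {U : Set X} {x : X} :
    x ∈ myS E U ↔ x ∈ E ∧ x ∈ U := by
  classical
  simp [myS]

noncomputable def myG {X : Type*} (E : Finset X) (U V : Set X)
    (h : (myS E U).card = (myS E V).card) (x : {y // y ∈ myS E U}) : {y // y ∈ myS E V} :=
  (myS E V).equivFin.symm (Fin.cast h ((myS E U).equivFin x))

lemma myG_comp {X : Type*} (E : Finset X) (U V W : Set X)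
    (h₁ : (myS E U).card = (myS E V).card) (h₂ : (myS E V).card = (myS E W).card)
    (x : {y // y ∈ myS E U}) :
    myG E V W h₂ (myG E U V h₁ x) = myG E U W (h₁.trans h₂) x := by
  simp only [myG, Equiv.apply_symm_apply]
  rfl

lemma myG_id {X : Type*} (E : Finset X) (U : Set X)
    (h : (myS E U).card = (myS E U).card) (x : {y // y ∈ myS E U}) :
    myG E U U h x = x := by
  have : Fin.cast h ((myS E U).equivFin x) = (myS E U).equivFin x := by ext; rfl
  simp [myG, this]

lemma myG_congr {X : Type*} (E : Finset X) {U U' V V' : Set X} (hU : U = U') (hV : V = V')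
    {h : (myS E U).card = (myS E V).card} {h' : (myS E U').card = (myS E V').card}
    {x : {y // y ∈ myS E U}} {x' : {y // y ∈ myS E U'}} (hx : (x : X) = (x' : X)) :
    ((myG E U V h x : {y // y ∈ myS E V}) : X) = ((myG E U' V' h' x' : {y // y ∈ myS E V'}) : X) := by
  subst hU; subst hV
  cases Subtype.ext hx
  rfl

/-- Given a finite group `Λ` acting on a Cantor set `X`, a `Λ`-invariant clopen
partition `𝒳` with pieces of diameter `< ε`, and a finite set `E ⊆ X` whose intersection counts
with partition pieces are `Λ`-invariant, there is a genuine action of `Λ` on `E` moving each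
point of `E ∩ U` into `λ·U`. -/
theorem exists_action_on_finite_set_compatible_with_partition
    {X : Type*} [MetricSpace X] [CompactSpace X] [TotallyDisconnectedSpace X]
    (hX : ∀ x : X, Filter.NeBot (𝓝[≠] x))
    {Λ : Type*} [Group Λ] [Finite Λ]
    (β : Λ → X ≃ₜ X)
    (hβ1 : β 1 = Homeomorph.refl X)
    (hβmul : ∀ l₁ l₂ : Λ, ∀ x : X, β (l₁ * l₂) x = β l₁ (β l₂ x))
    (𝒳 : Finset (Set X)) (ε : ℝ)
    (hclopen : ∀ U ∈ 𝒳, IsClopen U)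
    (hne : ∀ U ∈ 𝒳, U.Nonempty)
    (hcover : ∀ x : X, ∃ U ∈ 𝒳, x ∈ U)
    (hdisj : ∀ U ∈ 𝒳, ∀ V ∈ 𝒳, U ≠ V → Disjoint U V)
    (hdiam : ∀ U ∈ 𝒳, Metric.diam U < ε)
    (hpres : ∀ l : Λ, ∀ U ∈ 𝒳, (β l) '' U ∈ 𝒳)
    (E : Finset X)
    (hcount : ∀ l : Λ, ∀ U ∈ 𝒳, (↑E ∩ U).ncard = (↑E ∩ ((β l) '' U)).ncard) :
    ∃ σ : Λ →* Equiv.Perm {x // x ∈ E},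
      ∀ l : Λ, ∀ U ∈ 𝒳, ∀ e : {x // x ∈ E}, (e : X) ∈ U → ((σ l e : X)) ∈ (β l) '' U := by
  classical
  choose P hP1 hP2 using hcover
  have hPuniq : ∀ (x : X) (U : Set X), U ∈ 𝒳 → x ∈ U → U = P x := by
    intro x U hU hx
    by_contra h
    exact (Set.disjoint_left.mp (hdisj U hU (P x) (hP1 x) h) hx) (hP2 x)
  -- card invariance
  have hncard : ∀ V : Set X, ((E : Set X) ∩ V).ncard = (myS E V).card := by
    intro V
    rw [← Set.ncard_coe_finset]
    congr 1
    ext x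
    simp [myS, Set.mem_inter_iff, and_comm]
  have hSc : ∀ (l : Λ) (U : Set X), U ∈ 𝒳 → (myS E U).card = (myS E (β l '' U)).card := by
    intro l U hU
    rw [← hncard, ← hncard]
    exact hcount l U hU
  -- image lemmas
  have himg1 : ∀ U : Set X, β (1 : Λ) '' U = U := by
    intro U; rw [hβ1]; simp
  have himgmul : ∀ (l₁ l₂ : Λ) (U : Set X), β (l₁ * l₂) '' U = β l₁ '' (β l₂ '' U) := by
    intro l₁ l₂ U
    rw [Set.image_image]
    exact Set.image_congr fun x _ => hβmul l₁ l₂ x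
  -- the map
  let f : Λ → {x // x ∈ E} → {x // x ∈ E} := fun l e =>
    ⟨(myG E (P e.1) (β l '' P e.1) (hSc l _ (hP1 e.1))
        ⟨e.1, myS_mem.mpr ⟨e.2, hP2 e.1⟩⟩).1,
      (myS_mem.mp (myG E (P e.1) (β l '' P e.1) (hSc l _ (hP1 e.1))
        ⟨e.1, myS_mem.mpr ⟨e.2, hP2 e.1⟩⟩).2).1⟩
  have hf_val : ∀ (l : Λ) (e : {x // x ∈ E}),
      (f l e : X) = (myG E (P e.1) (β l '' P e.1) (hSc l _ (hP1 e.1))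
        ⟨e.1, myS_mem.mpr ⟨e.2, hP2 e.1⟩⟩ : X) := fun _ _ => rfl
  have hf_memS : ∀ (l : Λ) (e : {x // x ∈ E}), (f l e : X) ∈ β l '' P e.1 := by
    intro l e
    exact (myS_mem.mp (myG E (P e.1) (β l '' P e.1) (hSc l _ (hP1 e.1))
        ⟨e.1, myS_mem.mpr ⟨e.2, hP2 e.1⟩⟩).2).2
  have hf_P : ∀ (l : Λ) (e : {x // x ∈ E}), P (f l e : X) = β l '' P e.1 :=
    fun l e => (hPuniq _ _ (hpres l _ (hP1 e.1)) (hf_memS l e)).symm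
  have hf_mul : ∀ (l₁ l₂ : Λ) (e : {x // x ∈ E}), f (l₁ * l₂) e = f l₁ (f l₂ e) := by
    intro l₁ l₂ e
    apply Subtype.ext
    rw [hf_val, hf_val]
    have step1 : ((myG E (P ((f l₂ e : X))) (β l₁ '' P ((f l₂ e : X)))
        (hSc l₁ _ (hP1 _)) ⟨(f l₂ e : X), myS_mem.mpr ⟨(f l₂ e).2, hP2 _⟩⟩ : X))
        = ((myG E (β l₂ '' P e.1) (β l₁ '' (β l₂ '' P e.1))
            ((hSc l₂ _ (hP1 e.1)).symm.trans ((hSc l₂ _ (hP1 e.1)).trans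
              (hSc l₁ _ (hpres l₂ _ (hP1 e.1)))))
            (myG E (P e.1) (β l₂ '' P e.1) (hSc l₂ _ (hP1 e.1))
              ⟨e.1, myS_mem.mpr ⟨e.2, hP2 e.1⟩⟩) : X)) := by
      exact myG_congr E (hf_P l₂ e) (by rw [hf_P l₂ e]) (hf_val l₂ e)
    rw [step1, myG_comp]
    exact myG_congr E rfl (himgmul l₁ l₂ (P e.1)) rfl
  have hf_one : ∀ e : {x // x ∈ E}, f (1 : Λ) e = e := by
    intro e
    apply Subtype.ext
    rw [hf_val]
    have : ((myG E (P e.1) (β (1:Λ) '' P e.1) (hSc 1 _ (hP1 e.1))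
        ⟨e.1, myS_mem.mpr ⟨e.2, hP2 e.1⟩⟩ : X))
        = ((myG E (P e.1) (P e.1) rfl ⟨e.1, myS_mem.mpr ⟨e.2, hP2 e.1⟩⟩ : X)) :=
      myG_congr E rfl (himg1 (P e.1)) rfl
    rw [this, myG_id]
  have hli : ∀ l : Λ, Function.LeftInverse (f l⁻¹) (f l) := by
    intro l e
    rw [← hf_mul, inv_mul_cancel, hf_one]
  have hri : ∀ l : Λ, Function.RightInverse (f l⁻¹) (f l) := by
    intro l e
    rw [← hf_mul, mul_inv_cancel, hf_one]
  refine ⟨MonoidHom.mk' (fun l => ⟨f l, f l⁻¹, hli l, hri l⟩)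
      (fun l₁ l₂ => Equiv.ext fun e => hf_mul l₁ l₂ e), ?_⟩
  intro l U hU e he
  have hUe : U = P e.1 := hPuniq e.1 U hU he
  rw [hUe]
  exact hf_memS l e
end

section
/- Let Γ be a finite group acting on a Cantor set X, and let (αₙ) be an almost-action approximating this action (αₙ : Γ → Sym(Eₙ), Eₙ ⊆ X finite, with max_{e∈Eₙ} d(αₙ(γ)(e), γ·e) → 0 for all γ ∈ Γ). Then the dynamical perturbing problem for (αₙ) has a solution: there exist actions α̃ₙ : Γ → Sym(Eₙ) with max_{e∈Eₙ} d(αₙ(γ)(e), α̃ₙ(γ)(e)) → 0 for all γ ∈ Γ. -/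
open Filter Topology
open Filter Topology

/-- Key combinatorial lemma: a family of injections compatible with a coloring `c` and a
group action on colors can be replaced by a genuine action compatible with `c`. -/
lemma key_perm {S F : Type*} [Finite S] {Γ : Type*} [Group Γ]
    (act : Γ → F → F) (hact1 : ∀ f, act 1 f = f)
    (hactmul : ∀ γ₁ γ₂ f, act (γ₁ * γ₂) f = act γ₁ (act γ₂ f))
    (c : S → F) (a : Γ → S → S) (hinj : ∀ γ, Function.Injective (a γ))
    (hca : ∀ γ s, c (a γ s) = act γ (c s)) :
    ∃ σ : Γ →* Equiv.Perm S, ∀ γ s, c (σ γ s) = act γ (c s) := by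
  classical
  have hinvact : ∀ γ f, act γ⁻¹ (act γ f) = f := by
    intro γ f
    rw [← hactmul, inv_mul_cancel, hact1]
  set m : F → ℕ := fun f => Nat.card {s // c s = f} with hm
  have hle : ∀ (γ : Γ) (f : F), m f ≤ m (act γ f) := by
    intro γ f
    have : Function.Injective (fun s : {s // c s = f} =>
        (⟨a γ s.1, by rw [hca, s.2]⟩ : {s // c s = act γ f})) := by
      intro s t hst
      exact Subtype.ext (hinj γ (congrArg Subtype.val hst))
    exact Nat.card_le_card_of_injective _ this
  have hmeq : ∀ (γ : Γ) (f : F), m (act γ f) = m f := by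
    intro γ f
    refine le_antisymm ?_ (hle γ f)
    have := hle γ⁻¹ (act γ f)
    rwa [hinvact] at this
  -- equivalence with a disjoint union of `Fin`s
  let θ : S ≃ Σ f : F, Fin (m f) :=
    (Equiv.sigmaFiberEquiv c).symm.trans
      (Equiv.sigmaCongrRight fun f => Finite.equivFinOfCardEq rfl)
  have hθ1 : ∀ s, (θ s).1 = c s := fun s => rfl
  -- genuine action on the disjoint union
  let ρ : Γ → (Σ f : F, Fin (m f)) → (Σ f : F, Fin (m f)) :=
    fun γ p => ⟨act γ p.1, Fin.cast (hmeq γ p.1).symm p.2⟩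
  have hρ1 : ∀ p, ρ 1 p = p := by
    rintro ⟨f, i⟩
    refine Sigma.ext (hact1 f) ?_
    rw [Fin.heq_ext_iff (congrArg m (hact1 f))]
    rfl
  have hρmul : ∀ γ₁ γ₂ p, ρ (γ₁ * γ₂) p = ρ γ₁ (ρ γ₂ p) := by
    rintro γ₁ γ₂ ⟨f, i⟩
    refine Sigma.ext (hactmul γ₁ γ₂ f) ?_
    rw [Fin.heq_ext_iff (congrArg m (hactmul γ₁ γ₂ f))]
    rfl
  have hρinv : ∀ γ p, ρ γ⁻¹ (ρ γ p) = p := by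
    intro γ p
    rw [← hρmul, inv_mul_cancel, hρ1]
  let ρe : Γ → Equiv.Perm (Σ f : F, Fin (m f)) := fun γ =>
    ⟨ρ γ, ρ γ⁻¹, fun p => hρinv γ p, fun p => by
      have := hρinv γ⁻¹ p; rwa [inv_inv] at this⟩
  let σfun : Γ → Equiv.Perm S := fun γ => (θ.trans (ρe γ)).trans θ.symm
  have hσmul : ∀ γ₁ γ₂, σfun (γ₁ * γ₂) = σfun γ₁ * σfun γ₂ := by
    intro γ₁ γ₂
    ext s
    simp only [σfun, Equiv.Perm.mul_apply, Equiv.trans_apply, Equiv.apply_symm_apply]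
    rw [show (ρe (γ₁ * γ₂)) (θ s) = ρ (γ₁ * γ₂) (θ s) from rfl, hρmul]
    rfl
  refine ⟨MonoidHom.mk' σfun hσmul, ?_⟩
  intro γ s
  have : c (σfun γ s) = (θ (σfun γ s)).1 := rfl
  rw [MonoidHom.mk'_apply, this]
  have : θ (σfun γ s) = ρ γ (θ s) := by
    simp only [σfun, Equiv.trans_apply, Equiv.apply_symm_apply]
    rfl
  rw [this]
  show act γ (θ s).1 = act γ (c s)
  rw [hθ1]

/-- On a compact totally disconnected metric space with an action of a finite group,
there is an equivariant "coloring" with small fibers which is locally constant with a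
uniform modulus. -/
lemma exists_equivariant_coloring {X : Type*} [MetricSpace X] [CompactSpace X]
    [TotallyDisconnectedSpace X] {Γ : Type*} [Group Γ] [Finite Γ]
    (β : Γ → X ≃ₜ X) (hβ1 : β 1 = Homeomorph.refl X)
    (hβmul : ∀ γ₁ γ₂ : Γ, ∀ x : X, β (γ₁ * γ₂) x = β γ₁ (β γ₂ x))
    {ε : ℝ} (hε : 0 < ε) :
    ∃ (c : X → Γ → ℕ) (δ₀ : ℝ), 0 < δ₀ ∧
      (∀ x y : X, dist x y < δ₀ → c x = c y) ∧
      (∀ x y : X, c x = c y → dist x y < ε) ∧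
      (∀ (δ : Γ) (x : X), c (β δ x) = fun γ => c x (γ * δ)) := by
  classical
  have hV : ∀ x : X, ∃ V : Set X, IsClopen V ∧ x ∈ V ∧ V ⊆ Metric.ball x (ε / 2) := fun x =>
    compact_exists_isClopen_in_isOpen Metric.isOpen_ball (Metric.mem_ball_self (half_pos hε))
  choose V hVclopen hVmem hVsub using hV
  obtain ⟨t, ht⟩ := isCompact_univ.elim_finite_subcover V (fun x => (hVclopen x).2)
    (fun x _ => Set.mem_iUnion.2 ⟨x, hVmem x⟩)
  set L : List X := t.toList with hL
  have hQ : ∀ x : X, ∃ n : ℕ, ∃ h : n < L.length, x ∈ V (L.get ⟨n, h⟩) := by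
    intro x
    have := ht (Set.mem_univ x)
    rw [Set.mem_iUnion₂] at this
    obtain ⟨y, hyt, hxy⟩ := this
    have hyL : y ∈ L := (Finset.mem_toList).2 hyt
    obtain ⟨i, hi⟩ := List.mem_iff_get.1 hyL
    exact ⟨i.1, i.2, by rw [show (⟨i.1, i.2⟩ : Fin L.length) = i from rfl, hi]; exact hxy⟩
  set p : X → ℕ := fun x => Nat.find (hQ x) with hp
  set S : ℕ → Set X := fun n => ⋃ h : n < L.length, V (L.get ⟨n, h⟩) with hS
  have hSmem : ∀ (x : X) (n : ℕ), x ∈ S n ↔ ∃ h : n < L.length, x ∈ V (L.get ⟨n, h⟩) := by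
    intro x n; simp [hS]
  have hSopen : ∀ n, IsOpen (S n) := fun n => isOpen_iUnion fun h => (hVclopen _).2
  have hSclosed : ∀ n, IsClosed (S n) := by
    intro n
    by_cases h : n < L.length
    · have : S n = V (L.get ⟨n, h⟩) := by
        ext x; rw [hSmem]; exact ⟨fun ⟨_, hx⟩ => hx, fun hx => ⟨h, hx⟩⟩
      rw [this]; exact (hVclopen _).1
    · have : S n = ∅ := by
        ext x; rw [hSmem]; simp [h]
      rw [this]; exact isClosed_empty
  have hfiber : ∀ n : ℕ, {x : X | p x = n} = S n ∩ (⋃ m ∈ Finset.range n, S m)ᶜ := by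
    intro n
    ext x
    rw [Set.mem_setOf_eq, Set.mem_inter_iff]
    show Nat.find (hQ x) = n ↔ _
    rw [Nat.find_eq_iff]
    constructor
    · rintro ⟨h1, h2⟩
      refine ⟨(hSmem x n).2 h1, ?_⟩
      rw [Set.mem_compl_iff]
      intro hmem
      rw [Set.mem_iUnion₂] at hmem
      obtain ⟨m, hm, hmem⟩ := hmem
      exact h2 m (Finset.mem_range.1 hm) ((hSmem x m).1 hmem)
    · rintro ⟨h1, h2⟩
      rw [Set.mem_compl_iff] at h2
      refine ⟨(hSmem x n).1 h1, fun m hm hmem => ?_⟩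
      exact h2 (Set.mem_iUnion₂.2 ⟨m, Finset.mem_range.2 hm, (hSmem x m).2 hmem⟩)
  have hPopen : ∀ n : ℕ, IsOpen {x : X | p x = n} := by
    intro n
    rw [hfiber]
    exact (hSopen n).inter
      (Set.Finite.isClosed_biUnion (Finset.finite_toSet _) fun m _ => hSclosed m).isOpen_compl
  have hpx : ∀ x : X, ∃ h : p x < L.length, x ∈ V (L.get ⟨p x, h⟩) := fun x => Nat.find_spec (hQ x)
  -- the coloring
  refine ⟨fun x γ => p (β γ x), ?_⟩
  set c : X → Γ → ℕ := fun x γ => p (β γ x) with hc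
  have hUopen : ∀ f : Γ → ℕ, IsOpen {x : X | c x = f} := by
    intro f
    have : {x : X | c x = f} = ⋂ γ : Γ, (β γ) ⁻¹' {z : X | p z = f γ} := by
      ext x
      simp only [Set.mem_setOf_eq, Set.mem_iInter, Set.mem_preimage, funext_iff, hc]
    rw [this]
    exact isOpen_iInter_of_finite fun γ => (hPopen (f γ)).preimage (β γ).continuous
  obtain ⟨δ₀, hδ₀, hball⟩ := lebesgue_number_lemma_of_metric (s := (Set.univ : Set X))
    isCompact_univ hUopen (fun x _ => Set.mem_iUnion.2 ⟨c x, rfl⟩)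
  refine ⟨δ₀, hδ₀, ?_, ?_, ?_⟩
  · intro x y hxy
    obtain ⟨f, hf⟩ := hball x (Set.mem_univ x)
    have hx : c x = f := hf (Metric.mem_ball_self hδ₀)
    have hy : c y = f := hf (by rwa [Metric.mem_ball, dist_comm])
    rw [hx, hy]
  · intro x y hcxy
    have hpeq : p x = p y := by
      have := congrFun hcxy 1
      simpa only [hc, hβ1, Homeomorph.refl_apply, id] using this
    obtain ⟨h1, hx2⟩ := hpx x
    obtain ⟨h1', hy2⟩ := hpx y
    have h1'' : p x < L.length := hpeq ▸ h1'
    have hfin : (⟨p y, h1'⟩ : Fin L.length) = ⟨p x, h1''⟩ := Fin.ext hpeq.symm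
    rw [hfin] at hy2
    have hx2' : x ∈ V (L.get ⟨p x, h1''⟩) := by
      have : (⟨p x, h1⟩ : Fin L.length) = ⟨p x, h1''⟩ := rfl
      rwa [this] at hx2
    have hxg := hVsub _ hx2'
    have hyg := hVsub _ hy2
    rw [Metric.mem_ball] at hxg hyg
    calc dist x y ≤ dist x (L.get ⟨p x, h1''⟩) + dist (L.get ⟨p x, h1''⟩) y := dist_triangle _ _ _
      _ < ε / 2 + ε / 2 := by rw [dist_comm (L.get ⟨p x, h1''⟩) y]; exact add_lt_add hxg hyg
      _ = ε := add_halves ε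
  · intro δ x
    funext γ
    simp only [hc]
    rw [← hβmul]
/-- For a finite group `Γ` acting on a Cantor set `X`, any almost-action on finite
subsets `Eₙ ⊆ X` approximating the action can be perturbed to a sequence of genuine actions of
`Γ` on the sets `Eₙ`: the dynamical perturbing problem has a solution. -/
theorem finite_group_cantor_perturbing_problem_solvable
    {X : Type*} [MetricSpace X] [CompactSpace X] [TotallyDisconnectedSpace X]
    (hX : ∀ x : X, Filter.NeBot (𝓝[≠] x))
    {Γ : Type*} [Group Γ] [Finite Γ]
    (β : Γ → X ≃ₜ X)
    (hβ1 : β 1 = Homeomorph.refl X)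
    (hβmul : ∀ γ₁ γ₂ : Γ, ∀ x : X, β (γ₁ * γ₂) x = β γ₁ (β γ₂ x))
    (E : ℕ → Finset X) (α : ℕ → Γ → X → X)
    (hbij : ∀ n γ, Set.BijOn (α n γ) (E n) (E n))
    (halmost : ∀ γ δ : Γ, ∀ ε > (0 : ℝ), ∀ᶠ n in Filter.atTop,
      ∀ e ∈ E n, dist (α n γ (α n δ e)) (α n (γ * δ) e) < ε)
    (happrox : ∀ γ : Γ, ∀ ε > (0 : ℝ), ∀ᶠ n in Filter.atTop,
      ∀ e ∈ E n, dist (α n γ e) (β γ e) < ε) :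
    ∃ σ : ∀ n, Γ →* Equiv.Perm {x // x ∈ E n},
      ∀ γ : Γ, ∀ ε > (0 : ℝ), ∀ᶠ n in Filter.atTop,
        ∀ e : {x // x ∈ E n}, dist (α n γ (e : X)) ((σ n γ e : X)) < ε := by
  classical
  have := Fintype.ofFinite Γ
  -- the error of a candidate genuine action
  set err : ∀ n, (Γ →* Equiv.Perm {x // x ∈ E n}) → NNReal := fun n τ =>
    (Finset.univ : Finset (Γ × {x // x ∈ E n})).sup
      (fun q => nndist (α n q.1 (q.2 : X)) ((τ q.1 q.2 : X))) with herr
  -- choose, for every n, a genuine action minimizing the error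
  have hmin : ∀ n, ∃ τ₀ : Γ →* Equiv.Perm {x // x ∈ E n}, ∀ τ, err n τ₀ ≤ err n τ := by
    intro n
    have : Finite (Γ →* Equiv.Perm {x // x ∈ E n}) :=
      Finite.of_injective _ (DFunLike.coe_injective (F := Γ →* Equiv.Perm {x // x ∈ E n}))
    have : Nonempty (Γ →* Equiv.Perm {x // x ∈ E n}) := ⟨1⟩
    exact Finite.exists_min (err n)
  choose σ hσmin using hmin
  refine ⟨σ, ?_⟩
  intro γ ε hε
  -- the key eventual statement: some genuine action has error `< ε`
  obtain ⟨c, δ₀, hδ₀pos, hδ₀, hdiam, hequiv⟩ :=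
    exists_equivariant_coloring β hβ1 hβmul hε
  have happrox' : ∀ᶠ n in Filter.atTop, ∀ γ' : Γ, ∀ e ∈ E n,
      dist (α n γ' e) (β γ' e) < δ₀ :=
    Filter.eventually_all.2 fun γ' => happrox γ' δ₀ hδ₀pos
  have key : ∀ᶠ n in Filter.atTop, ∃ τ : Γ →* Equiv.Perm {x // x ∈ E n},
      ∀ (γ' : Γ) (e : {x // x ∈ E n}), dist (α n γ' (e : X)) ((τ γ' e : X)) < ε := by
    filter_upwards [happrox'] with n hn
    -- colors of approximate images are correct
    have hcol : ∀ (γ' : Γ) (e : {x // x ∈ E n}),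
        c (α n γ' (e : X)) = fun g => c (e : X) (g * γ') := by
      intro γ' e
      have h1 : c (α n γ' (e : X)) = c (β γ' (e : X)) :=
        hδ₀ _ _ (hn γ' (e : X) e.2)
      rw [h1, hequiv]
    obtain ⟨τ, hτ⟩ := key_perm (S := {x // x ∈ E n}) (F := Γ → ℕ)
      (fun δ f => fun g => f (g * δ))
      (by intro f; funext g; show f (g * 1) = f g; rw [mul_one])
      (by intro γ₁ γ₂ f; funext g; show f (g * (γ₁ * γ₂)) = f (g * γ₁ * γ₂); rw [mul_assoc])
      (fun s => c (s : X))
      (fun γ' s => ⟨α n γ' (s : X), (hbij n γ').mapsTo s.2⟩)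
      (by
        intro γ' s t hst
        exact Subtype.ext ((hbij n γ').injOn s.2 t.2 (congrArg Subtype.val hst)))
      (fun γ' s => hcol γ' s)
    refine ⟨τ, fun γ' e => ?_⟩
    exact hdiam _ _ (by rw [hcol γ' e, hτ γ' e])
  -- conclude using minimality of `σ n`
  filter_upwards [key] with n hn e
  obtain ⟨τ, hτ⟩ := hn
  have hεpos : (0 : NNReal) < ε.toNNReal := Real.toNNReal_pos.2 hε
  have hτerr : err n τ < ε.toNNReal := by
    rw [herr]
    refine Finset.sup_lt_iff hεpos |>.2 fun q _ => ?_
    have := hτ q.1 q.2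
    rwa [← NNReal.coe_lt_coe, coe_nndist, Real.coe_toNNReal ε hε.le]
  have hσerr : err n (σ n) < ε.toNNReal := lt_of_le_of_lt (hσmin n τ) hτerr
  have hle : nndist (α n γ (e : X)) ((σ n γ e : X)) ≤ err n (σ n) := by
    rw [herr]
    exact Finset.le_sup (f := fun q : Γ × {x // x ∈ E n} => nndist (α n q.1 (q.2 : X)) ((σ n q.1 q.2 : X))) (Finset.mem_univ (γ, e))
  have := lt_of_le_of_lt hle hσerr
  rwa [← NNReal.coe_lt_coe, coe_nndist, Real.coe_toNNReal ε hε.le] at this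
end

section
/- Let B be a unital C*-algebra and v ∈ B with ‖v − v v* v‖ < δ for sufficiently small δ. Let f be a continuous function on [0, ∞) with f = 0 near 0 and f(t) = t^{-1/2} near 1. Then w = v·f(v*v) is a partial isometry (w w* w = w) and ‖w − v‖ → 0 as δ → 0. -/
open Filter Topology

set_option maxHeartbeats 1000000 in
/-- If `v` in a unital C*-algebra satisfies `‖v - v v* v‖ < δ` for small `δ`, and
`f : [0,∞) → ℝ` is continuous, `0` near `0` and `t^{-1/2}` near `1`, then `w = v · f(v*v)` is a
partial isometry (`w w* w = w`) and `‖w - v‖ → 0` as `δ → 0`. -/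
theorem almost_partial_isometry_close_to_partial_isometry
    {B : Type*} [CStarAlgebra B] [PartialOrder B] [StarOrderedRing B]
    (f : ℝ → ℝ) (hf : Continuous f) (c : ℝ) (hc : 0 < c) (hc' : c < 2⁻¹)
    (hf0 : ∀ t : ℝ, |t| ≤ c → f t = 0)
    (hf1 : ∀ t : ℝ, |t - 1| ≤ c → f t = (Real.sqrt t)⁻¹) :
    ∀ ε > (0 : ℝ), ∃ δ > (0 : ℝ), ∀ v : B, ‖v - v * star v * v‖ < δ →
      (v * cfc f (star v * v)) * star (v * cfc f (star v * v)) * (v * cfc f (star v * v))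
          = v * cfc f (star v * v) ∧
        ‖v * cfc f (star v * v) - v‖ < ε := by
  intro ε hε
  set δ : ℝ := min (Real.sqrt (c ^ 3)) (ε / 2) with hδdef
  have hδpos : 0 < δ := lt_min (Real.sqrt_pos.mpr (by positivity)) (by linarith)
  have hδc : δ ^ 2 ≤ c ^ 3 := by
    calc δ ^ 2 ≤ Real.sqrt (c ^ 3) ^ 2 := by
          have h1 : δ ≤ Real.sqrt (c ^ 3) := min_le_left _ _
          nlinarith [hδpos.le]
      _ = c ^ 3 := Real.sq_sqrt (by positivity)
  have hδε : δ ≤ ε / 2 := min_le_right _ _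
  refine ⟨δ, hδpos, ?_⟩
  intro v hv
  set a : B := star v * v with ha_def
  have ha : IsSelfAdjoint a := IsSelfAdjoint.star_mul_self v
  have h1a : IsSelfAdjoint (1 - a) := (IsSelfAdjoint.one (R := B)).sub ha
  -- norm of (1-a) a (1-a)
  have hveq : v - v * star v * v = v * (1 - a) := by
    rw [ha_def]; noncomm_ring
  have hprod : star (v * (1 - a)) * (v * (1 - a)) = (1 - a) * a * (1 - a) := by
    rw [star_mul, h1a.star_eq, ha_def]; noncomm_ring
  have hn : ‖(1 - a) * a * (1 - a)‖ < δ ^ 2 := by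
    rw [← hprod, CStarRing.norm_star_mul_self]
    have h2 : ‖v * (1 - a)‖ < δ := by rw [← hveq]; exact hv
    nlinarith [norm_nonneg (v * (1 - a))]
  -- spectrum bound
  have hcfc_poly : cfc (fun t : ℝ => (1 - t) * t * (1 - t)) a = (1 - a) * a * (1 - a) := by
    rw [cfc_mul (fun t : ℝ => (1 - t) * t) (fun t : ℝ => 1 - t) a (by fun_prop) (by fun_prop),
      cfc_mul (fun t : ℝ => 1 - t) (fun t : ℝ => t) a (by fun_prop) (by fun_prop),
      cfc_id' ℝ a]
    have h3 : cfc (fun t : ℝ => 1 - t) a = 1 - a := by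
      rw [cfc_sub (fun _ : ℝ => (1 : ℝ)) (fun t : ℝ => t) a (by fun_prop) (by fun_prop),
        cfc_id' ℝ a, cfc_const (1 : ℝ) a, map_one]
    rw [h3]
  have hspec : ∀ t ∈ spectrum ℝ a, |(1 - t) * t * (1 - t)| < δ ^ 2 := by
    intro t ht
    have h4 := norm_apply_le_norm_cfc (fun t : ℝ => (1 - t) * t * (1 - t)) a ht (by fun_prop) ha
    rw [hcfc_poly] at h4
    calc |(1 - t) * t * (1 - t)| = ‖(1 - t) * t * (1 - t)‖ := rfl
      _ ≤ ‖(1 - a) * a * (1 - a)‖ := h4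
      _ < δ ^ 2 := hn
  -- dichotomy
  have hdi : ∀ t ∈ spectrum ℝ a, |t| ≤ c ∨ |t - 1| ≤ c := by
    intro t ht
    by_contra hcon
    push_neg at hcon
    obtain ⟨h1, h2⟩ := hcon
    have h5 := hspec t ht
    have h6 : |(1 - t) * t * (1 - t)| = |t - 1| * |t - 1| * |t| := by
      rw [abs_mul, abs_mul, abs_sub_comm 1 t]
      ring
    have q1 : c * c < |t - 1| * |t - 1| := mul_lt_mul'' h2 h2 hc.le hc.le
    have q2 : c * c * c < |t - 1| * |t - 1| * |t| :=
      mul_lt_mul'' q1 h1 (by positivity) hc.le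
    have q3 : c ^ 3 = c * c * c := by ring
    linarith
  -- part A : partial isometry
  have hA : (spectrum ℝ a).EqOn (fun t => f t * f t * t * f t) f := by
    intro t ht
    rcases hdi t ht with h | h
    · simp only [hf0 t h, zero_mul, mul_zero]
    · obtain ⟨hl, hr⟩ := abs_le.mp h
      have ht0 : 0 < t := by
        have : (2:ℝ)⁻¹ < 1 := by norm_num
        linarith
      have hs : Real.sqrt t * Real.sqrt t = t := Real.mul_self_sqrt ht0.le
      have hspos : 0 < Real.sqrt t := Real.sqrt_pos.mpr ht0
      have h' : (Real.sqrt t)⁻¹ * Real.sqrt t = 1 := inv_mul_cancel₀ hspos.ne'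
      show f t * f t * t * f t = f t
      rw [hf1 t h]
      linear_combination (-((Real.sqrt t)⁻¹) ^ 3) * hs +
        ((Real.sqrt t)⁻¹ * ((Real.sqrt t)⁻¹ * Real.sqrt t + 1)) * h'
  have hkey : cfc (fun t : ℝ => f t * f t * t * f t) a = cfc f a * cfc f a * a * cfc f a := by
    rw [cfc_mul (fun t : ℝ => f t * f t * t) f a (by fun_prop) hf.continuousOn,
      cfc_mul (fun t : ℝ => f t * f t) (fun t : ℝ => t) a (by fun_prop) (by fun_prop),
      cfc_mul f f a hf.continuousOn hf.continuousOn, cfc_id' ℝ a]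
  have hA' : cfc f a * cfc f a * a * cfc f a = cfc f a := by
    rw [← hkey]; exact cfc_congr hA
  have hFsa : IsSelfAdjoint (cfc f a) := cfc_predicate f a
  constructor
  · rw [star_mul, hFsa.star_eq]
    have h7 : v * cfc f a * (cfc f a * star v) * (v * cfc f a)
        = v * (cfc f a * cfc f a * (star v * v) * cfc f a) := by noncomm_ring
    rw [h7, ← ha_def, hA']
  -- part B : norm estimate
  · have hGsa : IsSelfAdjoint (cfc (fun t : ℝ => f t - 1) a) :=
      cfc_predicate (fun t : ℝ => f t - 1) a
    have hG : cfc (fun t : ℝ => f t - 1) a = cfc f a - 1 := by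
      rw [cfc_sub f (fun _ : ℝ => (1 : ℝ)) a hf.continuousOn (by fun_prop),
        cfc_const (1 : ℝ) a, map_one]
    have hwv : v * cfc f a - v = v * cfc (fun t : ℝ => f t - 1) a := by
      rw [hG]; noncomm_ring
    have hkeyB : cfc (fun t : ℝ => (f t - 1) * t * (f t - 1)) a
        = cfc (fun t : ℝ => f t - 1) a * a * cfc (fun t : ℝ => f t - 1) a := by
      rw [cfc_mul (fun t : ℝ => (f t - 1) * t) (fun t : ℝ => f t - 1) a (by fun_prop) (by fun_prop),
        cfc_mul (fun t : ℝ => f t - 1) (fun t : ℝ => t) a (by fun_prop) (by fun_prop),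
        cfc_id' ℝ a]
    have hb : ∀ t ∈ spectrum ℝ a, ‖(f t - 1) * t * (f t - 1)‖ < 4 * δ ^ 2 := by
      intro t ht
      have h5 := hspec t ht
      rcases hdi t ht with h | h
      · rw [hf0 t h]
        have h8 : ((0:ℝ) - 1) * t * (0 - 1) = t := by ring
        rw [h8]
        obtain ⟨hl, hr⟩ := abs_le.mp h
        have h9 : (2:ℝ)⁻¹ < 1 := by norm_num
        have h10 : |(1 - t) * t * (1 - t)| = (1 - t) * (1 - t) * |t| := by
          rw [abs_mul, abs_mul, abs_of_pos (by linarith : (0:ℝ) < 1 - t)]; ring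
        rw [h10] at h5
        show |t| < 4 * δ ^ 2
        have q : (2:ℝ)⁻¹ < 1 - t := by linarith
        have q2 : (0:ℝ) ≤ 4 * ((1 - t) * (1 - t)) - 1 := by nlinarith
        nlinarith [mul_nonneg (abs_nonneg t) q2]
      · obtain ⟨hl, hr⟩ := abs_le.mp h
        have h9 : (2:ℝ)⁻¹ < 1 := by norm_num
        have ht0 : 0 < t := by linarith
        have hs : Real.sqrt t * Real.sqrt t = t := Real.mul_self_sqrt ht0.le
        have hsnn : 0 ≤ Real.sqrt t := Real.sqrt_nonneg t
        have hspos : 0 < Real.sqrt t := Real.sqrt_pos.mpr ht0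
        rw [hf1 t h]
        have h' : (Real.sqrt t)⁻¹ * Real.sqrt t = 1 := inv_mul_cancel₀ hspos.ne'
        have he : ((Real.sqrt t)⁻¹ - 1) * t * ((Real.sqrt t)⁻¹ - 1)
            = (1 - Real.sqrt t) ^ 2 := by
          linear_combination (((Real.sqrt t)⁻¹ - 1) ^ 2) * hs.symm +
            ((Real.sqrt t)⁻¹ * Real.sqrt t + 1 - 2 * Real.sqrt t) * h'
        rw [he]
        show |(1 - Real.sqrt t) ^ 2| < 4 * δ ^ 2
        rw [abs_of_nonneg (sq_nonneg _)]
        have h11 : t * (1 - t) ^ 2 < δ ^ 2 := by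
          have h12 : (1 - t) * t * (1 - t) = t * (1 - t) ^ 2 := by ring
          rw [h12] at h5
          calc t * (1 - t) ^ 2 ≤ |t * (1 - t) ^ 2| := le_abs_self _
            _ < δ ^ 2 := h5
        have h13 : (1 - t) ^ 2 = (1 - Real.sqrt t) ^ 2 * (1 + Real.sqrt t) ^ 2 := by
          linear_combination (t + Real.sqrt t * Real.sqrt t - 2) * hs.symm
        have hq1 : (1 - t) ^ 2 < 2 * δ ^ 2 := by
          nlinarith [mul_nonneg (by linarith : (0:ℝ) ≤ t - 2⁻¹) (sq_nonneg (1 - t))]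
        have hq2 : (1 - Real.sqrt t) ^ 2 ≤ (1 - t) ^ 2 := by
          nlinarith [mul_nonneg (sq_nonneg (1 - Real.sqrt t))
            (show (0:ℝ) ≤ 2 * Real.sqrt t + Real.sqrt t ^ 2 by positivity)]
        have hq3 : (0:ℝ) < δ ^ 2 := by positivity
        linarith
    have hnormB : ‖cfc (fun t : ℝ => (f t - 1) * t * (f t - 1)) a‖ < 4 * δ ^ 2 :=
      norm_cfc_lt (by positivity) hb
    rw [hkeyB] at hnormB
    have hprodB : star (v * cfc (fun t : ℝ => f t - 1) a) * (v * cfc (fun t : ℝ => f t - 1) a)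
        = cfc (fun t : ℝ => f t - 1) a * a * cfc (fun t : ℝ => f t - 1) a := by
      rw [star_mul, hGsa.star_eq, ha_def]; noncomm_ring
    have h14 : ‖v * cfc (fun t : ℝ => f t - 1) a‖ ^ 2 < 4 * δ ^ 2 := by
      rw [sq, ← CStarRing.norm_star_mul_self, hprodB]
      exact hnormB
    have h15 : ‖v * cfc (fun t : ℝ => f t - 1) a‖ < 2 * δ := by
      have h16 : (4 : ℝ) * δ ^ 2 = (2 * δ) ^ 2 := by ring
      rw [h16] at h14
      exact lt_of_pow_lt_pow_left₀ 2 (by positivity) h14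
    rw [hwv]
    linarith
end

section
/- Let Γ be a group acting on a compact metric space X and let (αₙ) be an almost-action of Γ on finite subsets Eₙ ⊆ X uniformly approximating the action (i.e., sup_{γ∈Γ} max_{e∈Eₙ} d(αₙ(γ)(e), γ·e) → 0). Define, for f ∈ C(X) and γ ∈ Γ, operators πₙ(f) on ℓ²(Eₙ) ⊗ ℓ²(Γ) by πₙ(f)(ξ ⊗ δ_γ) = M_{(f ∘ αₙ(γ))|_{Eₙ}}(ξ) ⊗ δ_γ, where M denotes multiplication. Then for every γ ∈ Γ and f ∈ C(X), ‖(1 ⊗ λ_γ) πₙ(f) (1 ⊗ λ_γ)* − πₙ(γ·f)‖ → 0 as n → ∞, where λ is the left regular representation of Γ and (γ·f)(x) = f(γ⁻¹·x). -/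
open Filter Topology

/-- Asymptotic covariance of the operators `πₙ(f)` on `ℓ²(Eₙ) ⊗ ℓ²(Γ)` built from
an almost-action uniformly approximating an action `β` of `Γ` on `X`. The operators
`(1 ⊗ λ_γ) πₙ(f) (1 ⊗ λ_γ)*` and `πₙ(γ·f)` are both diagonal operators, given at the basis
vector `δ_e ⊗ δ_{γ₀}` by multiplication by `f(αₙ(γ⁻¹γ₀)(e))` and `(γ·f)(αₙ(γ₀)(e)) =
f(β(γ⁻¹)(αₙ(γ₀)(e)))` respectively; hence the operator norm of their difference is the
supremum over `e ∈ Eₙ`, `γ₀ ∈ Γ` of `|f(αₙ(γ⁻¹γ₀)(e)) - f(β(γ⁻¹)(αₙ(γ₀)(e)))|`, and the claim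
is that this tends to `0` as `n → ∞` for every `γ ∈ Γ` and `f ∈ C(X)`. -/
theorem asymptotic_covariance_of_almost_action_representation
    {X : Type*} [MetricSpace X] [CompactSpace X]
    {Γ : Type*} [Group Γ]
    (β : Γ → X ≃ₜ X)
    (hβ1 : β 1 = Homeomorph.refl X)
    (hβmul : ∀ γ₁ γ₂ : Γ, ∀ x : X, β (γ₁ * γ₂) x = β γ₁ (β γ₂ x))
    (E : ℕ → Finset X) (α : ℕ → Γ → X → X)
    (hbij : ∀ n γ, Set.BijOn (α n γ) (E n) (E n))
    (halmost : ∀ γ δ : Γ, ∀ ε > (0 : ℝ), ∀ᶠ n in atTop,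
      ∀ e ∈ E n, dist (α n γ (α n δ e)) (α n (γ * δ) e) < ε)
    (happrox : ∀ ε > (0 : ℝ), ∀ᶠ n in atTop,
      ∀ γ : Γ, ∀ e ∈ E n, dist (α n γ e) (β γ e) < ε) :
    ∀ (γ : Γ) (f : C(X, ℂ)), ∀ ε > (0 : ℝ), ∀ᶠ n in atTop,
      ∀ γ₀ : Γ, ∀ e ∈ E n,
        ‖f (α n (γ⁻¹ * γ₀) e) - f (β γ⁻¹ (α n γ₀ e))‖ < ε := by
  intro γ f ε hε
  -- uniform continuity of f
  have hf : UniformContinuous f := CompactSpace.uniformContinuous_of_continuous f.continuous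
  rw [Metric.uniformContinuous_iff] at hf
  obtain ⟨δf, hδf, hfδ⟩ := hf ε hε
  -- uniform continuity of β γ⁻¹
  have hg : UniformContinuous (β γ⁻¹) :=
    CompactSpace.uniformContinuous_of_continuous (β γ⁻¹).continuous
  rw [Metric.uniformContinuous_iff] at hg
  obtain ⟨δg, hδg, hgδ⟩ := hg (δf / 2) (by linarith)
  set δ := min (δf / 2) δg with hδdef
  have hδpos : 0 < δ := lt_min (by linarith) hδg
  filter_upwards [happrox δ hδpos] with n hn γ₀ e he
  have h1 : dist (α n (γ⁻¹ * γ₀) e) (β (γ⁻¹ * γ₀) e) < δ := hn _ e he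
  have h2 : dist (α n γ₀ e) (β γ₀ e) < δ := hn _ e he
  have h3 : dist (β γ⁻¹ (α n γ₀ e)) (β γ⁻¹ (β γ₀ e)) < δf / 2 :=
    hgδ (lt_of_lt_of_le h2 (min_le_right _ _))
  have hkey : dist (α n (γ⁻¹ * γ₀) e) (β γ⁻¹ (α n γ₀ e)) < δf := by
    have := dist_triangle (α n (γ⁻¹ * γ₀) e) (β (γ⁻¹ * γ₀) e) (β γ⁻¹ (α n γ₀ e))
    have h4 : dist (β (γ⁻¹ * γ₀) e) (β γ⁻¹ (α n γ₀ e)) < δf / 2 := by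
      rw [hβmul γ⁻¹ γ₀ e, dist_comm]
      exact h3
    have h1' : dist (α n (γ⁻¹ * γ₀) e) (β (γ⁻¹ * γ₀) e) < δf / 2 :=
      lt_of_lt_of_le h1 (min_le_left _ _)
    linarith
  have := hfδ hkey
  rwa [dist_eq_norm] at this
end

section
/- Let Γ be a countable group acting on a compact metric space X with no isolated points, and suppose the action is residually finite: for every finite F ⊆ Γ and ε > 0 there are a finite set E, a map ζ : E → X, and an action of Γ on E with d(ζ(γ·e), γ·ζ(e)) < ε for all γ ∈ F and e ∈ E. Then ζ can be taken to be an inclusion E ⊆ X: for every finite F ⊆ Γ and ε > 0 there are a finite subset E ⊆ X and an action of Γ on E with d(γ·e (in E), γ·e (in X)) < ε for all γ ∈ F, e ∈ E. -/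
open Filter Topology

lemma exists_injective_close_aux {X : Type*} [MetricSpace X]
    (hX : ∀ x : X, Filter.NeBot (𝓝[≠] x))
    {δ : ℝ} (hδ : 0 < δ) :
    ∀ (k : ℕ) (ζ : Fin k → X), ∃ ζ' : Fin k → X,
      Function.Injective ζ' ∧ ∀ i, dist (ζ' i) (ζ i) < δ := by
  intro k
  induction k with
  | zero => exact fun ζ => ⟨ζ, fun i => i.elim0, fun i => i.elim0⟩
  | succ n ih =>
    intro ζ
    obtain ⟨ζ'', hinj, hd⟩ := ih (ζ ∘ Fin.castSucc)
    have hball : (Metric.ball (ζ (Fin.last n)) δ).Infinite := by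
      have := hX (ζ (Fin.last n))
      exact infinite_of_mem_nhds _ (Metric.ball_mem_nhds _ hδ)
    obtain ⟨y, hy1, hy2⟩ := (hball.diff (Set.finite_range ζ'')).nonempty
    refine ⟨Fin.snoc ζ'' y, ?_, ?_⟩
    · intro i j hij
      induction i using Fin.lastCases with
      | last =>
        induction j using Fin.lastCases with
        | last => rfl
        | cast j =>
          simp only [Fin.snoc_last, Fin.snoc_castSucc] at hij
          exact absurd ⟨j, hij.symm⟩ hy2
      | cast i =>
        induction j using Fin.lastCases with
        | last =>
          simp only [Fin.snoc_last, Fin.snoc_castSucc] at hij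
          exact absurd ⟨i, hij⟩ hy2
        | cast j =>
          simp only [Fin.snoc_castSucc] at hij
          exact congrArg Fin.castSucc (hinj hij)
    · intro i
      induction i using Fin.lastCases with
      | last => simpa using Metric.mem_ball.mp hy1
      | cast i => simpa using hd i

/-- For a countable group acting on a compact metric space without isolated
points, residual finiteness of the action (approximation by finite `Γ`-sets mapped
almost-equivariantly into `X`) implies the approximating finite sets can be taken to be genuine
subsets `E ⊆ X` with the map being the inclusion. -/
theorem residually_finite_action_with_inclusion
    {X : Type*} [MetricSpace X] [CompactSpace X]
    (hX : ∀ x : X, Filter.NeBot (𝓝[≠] x))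
    {Γ : Type*} [Group Γ] [Countable Γ]
    (β : Γ → X ≃ₜ X)
    (hβ1 : β 1 = Homeomorph.refl X)
    (hβmul : ∀ γ₁ γ₂ : Γ, ∀ x : X, β (γ₁ * γ₂) x = β γ₁ (β γ₂ x))
    (hRF : ∀ F : Finset Γ, ∀ ε > (0 : ℝ),
      ∃ (E : Type) (_ : Fintype E) (σ : Γ →* Equiv.Perm E) (ζ : E → X),
        ∀ γ ∈ F, ∀ e : E, dist (ζ (σ γ e)) (β γ (ζ e)) < ε) :
    ∀ F : Finset Γ, ∀ ε > (0 : ℝ),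
      ∃ (E : Finset X) (σ : Γ →* Equiv.Perm {x // x ∈ E}),
        ∀ γ ∈ F, ∀ e : {x // x ∈ E}, dist ((σ γ e : X)) (β γ (e : X)) < ε := by
  classical
  intro F ε hε
  -- a uniform modulus for all γ ∈ F
  have key : ∃ δ > (0 : ℝ), δ ≤ ε / 3 ∧
      ∀ γ ∈ F, ∀ a b : X, dist a b < δ → dist (β γ a) (β γ b) < ε / 3 := by
    induction F using Finset.induction with
    | empty => exact ⟨ε / 3, by positivity, le_refl _, by simp⟩
    | @insert γ₀ F' hγ ih =>
      obtain ⟨δ, hδ, hδ3, hδF⟩ := ih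
      have huc : UniformContinuous (β γ₀) :=
        CompactSpace.uniformContinuous_of_continuous (β γ₀).continuous
      obtain ⟨δ', hδ', hδ'F⟩ := Metric.uniformContinuous_iff.mp huc (ε / 3) (by positivity)
      refine ⟨min δ δ', lt_min hδ hδ', (min_le_left _ _).trans hδ3, ?_⟩
      intro γ hγm a b hab
      rcases Finset.mem_insert.mp hγm with h | h
      · subst h; exact hδ'F (lt_of_lt_of_le hab (min_le_right _ _))
      · exact hδF γ h a b (lt_of_lt_of_le hab (min_le_left _ _))
  obtain ⟨δ, hδ, hδ3, hδF⟩ := key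
  obtain ⟨E, instE, σ, ζ, hζ⟩ := hRF F (ε / 3) (by positivity)
  -- perturb ζ to an injective map
  have hcl : ∃ ζ' : E → X, Function.Injective ζ' ∧ ∀ e, dist (ζ' e) (ζ e) < δ := by
    obtain ⟨ζ'0, hinj0, hd0⟩ :=
      exists_injective_close_aux hX hδ (Fintype.card E) (ζ ∘ (Fintype.equivFin E).symm)
    refine ⟨ζ'0 ∘ Fintype.equivFin E, ?_, ?_⟩
    · exact hinj0.comp (Fintype.equivFin E).injective
    · intro e; simpa using hd0 (Fintype.equivFin E e)
  obtain ⟨ζ', hinj, hd⟩ := hcl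
  set E' : Finset X := Finset.image ζ' Finset.univ with hE'
  have hmem : ∀ e : E, ζ' e ∈ E' := fun e => Finset.mem_image_of_mem _ (Finset.mem_univ e)
  have hbij : Function.Bijective (fun e : E => (⟨ζ' e, hmem e⟩ : {x // x ∈ E'})) := by
    constructor
    · intro a b hab
      exact hinj (congrArg Subtype.val hab)
    · rintro ⟨x, hx⟩
      obtain ⟨e, -, rfl⟩ := Finset.mem_image.mp hx
      exact ⟨e, rfl⟩
  let eqE : E ≃ {x // x ∈ E'} := Equiv.ofBijective _ hbij
  have heq : ∀ e : E, ((eqE e : {x // x ∈ E'}) : X) = ζ' e := fun e => rfl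
  refine ⟨E', { toFun := fun γ => (eqE.symm.trans (σ γ)).trans eqE,
                map_one' := by ext x; simp,
                map_mul' := by
                  intro a b
                  ext x
                  simp [Equiv.Perm.mul_apply, map_mul] }, ?_⟩
  intro γ hγ e
  set e0 : E := eqE.symm e with he0
  have he : (e : X) = ζ' e0 := by
    rw [← heq e0, he0, Equiv.apply_symm_apply]
  have hs : ((((eqE.symm.trans (σ γ)).trans eqE) e : {x // x ∈ E'}) : X) = ζ' (σ γ e0) := by
    simp [Equiv.trans_apply, heq, he0]
  simp only [MonoidHom.coe_mk, OneHom.coe_mk, hs, he]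
  calc dist (ζ' (σ γ e0)) (β γ (ζ' e0))
      ≤ dist (ζ' (σ γ e0)) (ζ (σ γ e0)) + dist (ζ (σ γ e0)) (β γ (ζ e0))
        + dist (β γ (ζ e0)) (β γ (ζ' e0)) := dist_triangle4 _ _ _ _
    _ < δ + ε / 3 + ε / 3 := by
        gcongr
        · exact hd _
        · exact hζ γ hγ e0
        · exact hδF γ hγ _ _ (by rw [dist_comm]; exact hd e0)
    _ ≤ ε / 3 + ε / 3 + ε / 3 := by linarith
    _ = ε := by ring
end
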